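/- (Corollary 2.2 for H_g.) Let ν ≥ 2, L > 0, g > 0, and let γ : ℝ → ℝ^ν be a C², L-periodic curve parametrized by arc length (‖γ'(s)‖ = 1 for all s). Set V(s) := g·‖γ''(s)‖². Suppose u_1 : ℝ → ℝ is C², L-periodic, satisfies −u_1''(s) + V(s) u_1(s) = λ_1 u_1(s) for all s and ∫_0^L u_1(s)² ds = 1, and suppose λ_2 ∈ ℝ is such that every C², L-periodic φ : ℝ → ℝ with ∫_0^L φ(s) u_1(s) ds = 0 satisfies ∫_0^L (φ'(s)² + V(s) φ(s)²) ds ≥ λ_2 ∫_0^L φ(s)² ds. Then λ_2 − λ_1 ≤ max(4, 1/g)·λ_1. -/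

import Mathlib

/-
Test the coordinates of `w u₁`, where `w = γ - ∫ u₁² γ` is the curve centred at its
`u₁²`-weighted mean, in the variational characterisation of `λ₂`. The ground-state substitution
`∫ ((w_j u₁)'² + V (w_j u₁)²) = λ₁ ∫ (w_j u₁)² + ∫ w_j'² u₁²` and `|γ'| = 1` give
`(λ₂ - λ₁) ∫ |w u₁|² ≤ 1`. On the other hand, pairing `w u₁` with
`(w u₁)'' - w u₁'' = w'' u₁ + 2 w' u₁'` and integrating by parts gives `-∫ |w'|² u₁² = -1`, so by
Cauchy–Schwarz `1 ≤ ∫ |w u₁|² · ∫ |w'' u₁ + 2 w' u₁'|²`. Since `w' ⊥ w''`, the last integral is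
`∫ (κ² u₁² + 4 u₁'²) ≤ max 4 (1/g) · ∫ (u₁'² + g κ² u₁²) = max 4 (1/g) · λ₁`.
-/

open MeasureTheory intervalIntegral Function RealInnerProductSpace

theorem Function.Periodic.deriv {F : Type*} [NormedAddCommGroup F] [NormedSpace ℝ F]
    {f : ℝ → F} {c : ℝ} (h : Periodic f c) : Periodic (deriv f) c := fun s => by
  rw [← deriv_comp_add_const, h.funext]

theorem Function.Periodic.intervalIntegral_eq_zero_of_hasDerivAt {F : Type*}
    [NormedAddCommGroup F] [NormedSpace ℝ F] [CompleteSpace F] {f f' : ℝ → F} {L : ℝ}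
    (h : Periodic f L) (hf : ∀ s, HasDerivAt f (f' s) s) (hf' : IntervalIntegrable f' volume 0 L) :
    ∫ s in 0..L, f' s = 0 := by
  rw [integral_eq_sub_of_hasDerivAt (fun s _ => hf s) hf', ← zero_add L, h 0, sub_self]

theorem le_of_mul_le_one_of_one_le_mul {x y z : ℝ} (hxz : x * z ≤ 1) (hzy : 1 ≤ z * y)
    (hz : 0 ≤ z) : x ≤ y := by
  have hz_pos : 0 < z := hz.lt_of_ne fun h => by rw [← h, zero_mul] at hzy; linarith
  exact le_of_mul_le_mul_right (by linarith) hz_pos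

section InnerProductSpace

variable {F : Type*} [NormedAddCommGroup F] [InnerProductSpace ℝ F]

theorem sq_intervalIntegral_inner_le {f g : ℝ → F} {a b : ℝ} (hab : a ≤ b) (hf : Continuous f)
    (hg : Continuous g) :
    (∫ s in a..b, ⟪f s, g s⟫) ^ 2 ≤ (∫ s in a..b, ‖f s‖ ^ 2) * ∫ s in a..b, ‖g s‖ ^ 2 := by
  have hc : ∀ φ : ℝ → ℝ, Continuous φ → IntervalIntegrable φ volume a b :=
    fun φ h => h.intervalIntegrable a b
  have hquad (t : ℝ) : 0 ≤ (∫ s in a..b, ‖g s‖ ^ 2) * (t * t)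
      + 2 * (∫ s in a..b, ⟪f s, g s⟫) * t + ∫ s in a..b, ‖f s‖ ^ 2 := by
    have hexp s : ‖f s + t • g s‖ ^ 2
        = ‖g s‖ ^ 2 * (t * t) + 2 * ⟪f s, g s⟫ * t + ‖f s‖ ^ 2 := by
      rw [norm_add_sq_real, norm_smul, inner_smul_right, Real.norm_eq_abs, mul_pow, sq_abs]
      ring
    have hint := integral_nonneg (μ := volume) hab fun s _ => sq_nonneg ‖f s + t • g s‖
    simp only [hexp] at hint
    rwa [intervalIntegral.integral_add (hc _ (by fun_prop)) (hc _ (by fun_prop)),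
      intervalIntegral.integral_add (hc _ (by fun_prop)) (hc _ (by fun_prop)),
      intervalIntegral.integral_mul_const, intervalIntegral.integral_mul_const,
      intervalIntegral.integral_const_mul] at hint
  have hdiscr := discrim_le_zero hquad
  rw [discrim] at hdiscr
  nlinarith

theorem intervalIntegral_smul_sub_integral_smul_eq_zero [CompleteSpace F] {ρ : ℝ → ℝ}
    {f : ℝ → F} {a b : ℝ} (hρ : Continuous ρ) (hf : Continuous f) (hρ_one : ∫ s in a..b, ρ s = 1) :
    ∫ s in a..b, ρ s • (f s - ∫ t in a..b, ρ t • f t) = 0 := by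
  simp only [smul_sub]
  rw [intervalIntegral.integral_sub ((by fun_prop : Continuous _).intervalIntegrable a b)
    ((by fun_prop : Continuous _).intervalIntegrable a b), intervalIntegral.integral_smul_const,
    hρ_one, one_smul, sub_self]

theorem inner_deriv_eq_zero_of_norm_eq_const {f : ℝ → F} {c : ℝ} (hf : Differentiable ℝ f)
    (h : ∀ s, ‖f s‖ = c) (s : ℝ) : ⟪f s, deriv f s⟫ = 0 := by
  have hconst : (fun t => ‖f t‖ ^ 2) = fun _ => c ^ 2 := funext fun t => by rw [h]
  have := (hf s).hasDerivAt.norm_sq.unique (hconst ▸ hasDerivAt_const s (c ^ 2))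
  linarith

/-- `(u w)'' - u'' w`, the commutator of `d²/ds²` with multiplication by `w`, applied to `u`. -/
noncomputable def derivSqCommutator (w : ℝ → F) (u : ℝ → ℝ) (s : ℝ) : F :=
  u s • deriv (deriv w) s + (2 * deriv u s) • deriv w s

variable {u : ℝ → ℝ} {w : ℝ → F}

theorem continuous_derivSqCommutator (hu : ContDiff ℝ 1 u) (hw : ContDiff ℝ 2 w) :
    Continuous (derivSqCommutator w u) := by
  have hw'' := (hw.deriv' (n := 1)).continuous_deriv_one
  have hw' := hw.continuous_deriv (by norm_num)
  have hu' := hu.continuous_deriv_one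
  unfold derivSqCommutator
  fun_prop

theorem integral_inner_smul_derivSqCommutator {L : ℝ} (hu : ContDiff ℝ 1 u) (hw : ContDiff ℝ 2 w)
    (hup : Periodic u L) (hwp : Periodic w L) :
    ∫ s in 0..L, ⟪u s • w s, derivSqCommutator w u s⟫ =
      -∫ s in 0..L, u s ^ 2 * ‖deriv w s‖ ^ 2 := by
  have hc : ∀ φ : ℝ → ℝ, Continuous φ → IntervalIntegrable φ volume 0 L :=
    fun φ h => h.intervalIntegrable 0 L
  have hw' : ContDiff ℝ 1 (deriv w) := hw.deriv' (n := 1)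
  have hw''_cont := hw'.continuous_deriv_one
  have hw'_cont := hw'.continuous
  have hw_cont := hw.continuous
  have hu'_cont := hu.continuous_deriv_one
  have hu_cont := hu.continuous
  have huD s : HasDerivAt u (deriv u s) s := (hu.differentiable one_ne_zero s).hasDerivAt
  have hwD s : HasDerivAt w (deriv w s) s := (hw.differentiable two_ne_zero s).hasDerivAt
  have hw'D s : HasDerivAt (deriv w) (deriv (deriv w) s) s :=
    (hw'.differentiable one_ne_zero s).hasDerivAt
  have hexact : ∫ s in 0..L, (2 * u s * deriv u s * ⟪w s, deriv w s⟫ +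
      u s ^ 2 * (⟪w s, deriv (deriv w) s⟫ + ⟪deriv w s, deriv w s⟫)) = 0 :=
    Periodic.intervalIntegral_eq_zero_of_hasDerivAt
      (f := fun t => u t ^ 2 * ⟪w t, deriv w t⟫)
      (fun s => by simp only [hup s, hwp s, hwp.deriv s])
      (fun s => (((huD s).fun_pow 2).fun_mul ((hwD s).inner ℝ (hw'D s))).congr_deriv (by ring))
      (hc _ (by fun_prop))
  have hpt s : ⟪u s • w s, derivSqCommutator w u s⟫ =
      (2 * u s * deriv u s * ⟪w s, deriv w s⟫ +
        u s ^ 2 * (⟪w s, deriv (deriv w) s⟫ + ⟪deriv w s, deriv w s⟫)) -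
      u s ^ 2 * ‖deriv w s‖ ^ 2 := by
    simp only [derivSqCommutator, inner_add_right, inner_smul_left, inner_smul_right,
      real_inner_self_eq_norm_sq, RCLike.conj_to_real]
    ring
  rw [integral_congr fun s _ => hpt s, intervalIntegral.integral_sub (hc _ (by fun_prop))
    (hc _ (by fun_prop)), hexact, zero_sub]

theorem norm_derivSqCommutator_sq (hw : Differentiable ℝ (deriv w))
    (hnorm : ∀ s, ‖deriv w s‖ = 1) (s : ℝ) :
    ‖derivSqCommutator w u s‖ ^ 2 = u s ^ 2 * ‖deriv (deriv w) s‖ ^ 2 + 4 * deriv u s ^ 2 := by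
  have horth := inner_deriv_eq_zero_of_norm_eq_const hw hnorm s
  rw [derivSqCommutator, norm_add_sq_real, norm_smul, norm_smul, inner_smul_left,
    inner_smul_right, real_inner_comm, horth, hnorm, Real.norm_eq_abs, Real.norm_eq_abs]
  simp only [mul_pow, sq_abs]
  ring

theorem norm_derivSqCommutator_sq_le {g : ℝ} (hg : 0 < g) {V : ℝ → ℝ}
    (hw : Differentiable ℝ (deriv w)) (hnorm : ∀ s, ‖deriv w s‖ = 1)
    (hV : ∀ s, V s = g * ‖deriv (deriv w) s‖ ^ 2) (s : ℝ) :
    ‖derivSqCommutator w u s‖ ^ 2 ≤ max 4 (1 / g) * (deriv u s ^ 2 + V s * u s ^ 2) := by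
  have hVu : 0 ≤ V s * u s ^ 2 := by rw [hV]; positivity
  have hκ : u s ^ 2 * ‖deriv (deriv w) s‖ ^ 2 = 1 / g * (V s * u s ^ 2) := by
    rw [hV]; field_simp
  rw [norm_derivSqCommutator_sq hw hnorm, hκ]
  nlinarith [mul_le_mul_of_nonneg_right (le_max_right 4 (1 / g)) hVu,
    mul_le_mul_of_nonneg_right (le_max_left 4 (1 / g)) (sq_nonneg (deriv u s))]

theorem integral_norm_derivSqCommutator_sq_le {L g : ℝ} (hL : 0 ≤ L) (hg : 0 < g) {V : ℝ → ℝ}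
    (hu : ContDiff ℝ 1 u) (hw : ContDiff ℝ 2 w) (hnorm : ∀ s, ‖deriv w s‖ = 1)
    (hV : ∀ s, V s = g * ‖deriv (deriv w) s‖ ^ 2) :
    ∫ s in 0..L, ‖derivSqCommutator w u s‖ ^ 2 ≤
      max 4 (1 / g) * ∫ s in 0..L, (deriv u s ^ 2 + V s * u s ^ 2) := by
  have hw' : ContDiff ℝ 1 (deriv w) := hw.deriv' (n := 1)
  have hw''_cont := hw'.continuous_deriv_one
  have hu'_cont := hu.continuous_deriv_one
  have hu_cont := hu.continuous
  have hV_cont : Continuous V := by rw [funext hV]; fun_prop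
  rw [← intervalIntegral.integral_const_mul]
  exact integral_mono_on hL
    (((continuous_derivSqCommutator hu hw).norm.pow 2).intervalIntegrable _ _)
    (Continuous.intervalIntegrable (by fun_prop) _ _)
    fun s _ => norm_derivSqCommutator_sq_le hg (hw'.differentiable one_ne_zero) hnorm hV s

end InnerProductSpace

section Eigenfunction

variable {L lam : ℝ} {u V : ℝ → ℝ}

theorem integral_energy_mul_eigenfunction (hu : ContDiff ℝ 2 u) (hup : Periodic u L)
    (heig : ∀ s, -deriv (deriv u) s + V s * u s = lam * u s) {w : ℝ → ℝ} (hw : ContDiff ℝ 1 w)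
    (hwp : Periodic w L) :
    ∫ s in 0..L, (deriv (fun t => w t * u t) s ^ 2 + V s * (w s * u s) ^ 2) =
      lam * (∫ s in 0..L, (w s * u s) ^ 2) + ∫ s in 0..L, deriv w s ^ 2 * u s ^ 2 := by
  have hc : ∀ φ : ℝ → ℝ, Continuous φ → IntervalIntegrable φ volume 0 L :=
    fun φ h => h.intervalIntegrable 0 L
  have hu' : ContDiff ℝ 1 (deriv u) := hu.deriv' (n := 1)
  have hu''_cont := hu'.continuous_deriv_one
  have hu'_cont := hu'.continuous
  have hw'_cont := hw.continuous_deriv_one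
  have hw_cont := hw.continuous
  have hu_cont := hu.continuous
  have hwD s : HasDerivAt w (deriv w s) s := (hw.differentiable one_ne_zero s).hasDerivAt
  have huD s : HasDerivAt u (deriv u s) s := (hu.differentiable two_ne_zero s).hasDerivAt
  have hu'D s : HasDerivAt (deriv u) (deriv (deriv u) s) s :=
    (hu'.differentiable one_ne_zero s).hasDerivAt
  have hexact : ∫ s in 0..L, (2 * w s * deriv w s * (deriv u s * u s)
      + w s ^ 2 * (deriv (deriv u) s * u s + deriv u s * deriv u s)) = 0 :=
    Periodic.intervalIntegral_eq_zero_of_hasDerivAt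
      (f := fun t => w t ^ 2 * (deriv u t * u t))
      (fun s => by simp only [hwp s, hup s, hup.deriv s])
      (fun s => (((hwD s).fun_pow 2).fun_mul ((hu'D s).fun_mul (huD s))).congr_deriv (by ring))
      (hc _ (by fun_prop))
  have hpt s : deriv (fun t => w t * u t) s ^ 2 + V s * (w s * u s) ^ 2 =
      (lam * (w s * u s) ^ 2 + deriv w s ^ 2 * u s ^ 2) +
      (2 * w s * deriv w s * (deriv u s * u s)
        + w s ^ 2 * (deriv (deriv u) s * u s + deriv u s * deriv u s)) := by
    rw [((hwD s).fun_mul (huD s)).deriv]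
    linear_combination (w s ^ 2 * u s) * heig s
  rw [integral_congr fun s _ => hpt s, intervalIntegral.integral_add (hc _ (by fun_prop))
    (hc _ (by fun_prop)), hexact, add_zero, intervalIntegral.integral_add (hc _ (by fun_prop))
    (hc _ (by fun_prop)), intervalIntegral.integral_const_mul]

theorem integral_energy_eigenfunction (hu : ContDiff ℝ 2 u) (hup : Periodic u L)
    (heig : ∀ s, -deriv (deriv u) s + V s * u s = lam * u s) :
    ∫ s in 0..L, (deriv u s ^ 2 + V s * u s ^ 2) = lam * ∫ s in 0..L, u s ^ 2 := by
  simpa using integral_energy_mul_eigenfunction hu hup heig (w := fun _ => 1) contDiff_const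
    (fun _ => rfl)

theorem gap_mul_integral_sq_le {lam' : ℝ} (hu : ContDiff ℝ 2 u) (hup : Periodic u L)
    (heig : ∀ s, -deriv (deriv u) s + V s * u s = lam * u s)
    (hlam' : ∀ φ : ℝ → ℝ, ContDiff ℝ 2 φ → Periodic φ L → ∫ s in 0..L, φ s * u s = 0 →
      lam' * ∫ s in 0..L, φ s ^ 2 ≤ ∫ s in 0..L, (deriv φ s ^ 2 + V s * φ s ^ 2))
    {w : ℝ → ℝ} (hw : ContDiff ℝ 2 w) (hwp : Periodic w L)
    (horth : ∫ s in 0..L, w s * u s * u s = 0) :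
    (lam' - lam) * ∫ s in 0..L, (w s * u s) ^ 2 ≤ ∫ s in 0..L, deriv w s ^ 2 * u s ^ 2 := by
  have h := hlam' _ (hw.mul hu) (fun s => by simp only [hwp s, hup s]) horth
  rw [integral_energy_mul_eigenfunction hu hup heig (hw.of_le one_le_two) hwp] at h
  linarith

theorem intervalIntegral_sum_eq_sum_intervalIntegral {ι : Type*} [Fintype ι] {f : ι → ℝ → ℝ}
    (hf : ∀ i, Continuous (f i)) (a b : ℝ) :
    ∫ s in a..b, ∑ i, f i s = ∑ i, ∫ s in a..b, f i s :=
  intervalIntegral.integral_finsetSum fun i _ => (hf i).intervalIntegrable a b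

theorem gap_mul_integral_norm_sq_le {ι : Type*} [Fintype ι] {lam' : ℝ}
    (hu : ContDiff ℝ 2 u) (hup : Periodic u L)
    (heig : ∀ s, -deriv (deriv u) s + V s * u s = lam * u s)
    (hlam' : ∀ φ : ℝ → ℝ, ContDiff ℝ 2 φ → Periodic φ L → ∫ s in 0..L, φ s * u s = 0 →
      lam' * ∫ s in 0..L, φ s ^ 2 ≤ ∫ s in 0..L, (deriv φ s ^ 2 + V s * φ s ^ 2))
    {w : ℝ → EuclideanSpace ℝ ι} (hw : ContDiff ℝ 2 w) (hwp : Periodic w L)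
    (horth : ∫ s in 0..L, u s ^ 2 • w s = 0) :
    (lam' - lam) * ∫ s in 0..L, ‖u s • w s‖ ^ 2 ≤ ∫ s in 0..L, ‖deriv w s‖ ^ 2 * u s ^ 2 := by
  have hw_cont := hw.continuous
  have hw'_cont := hw.continuous_deriv (by norm_num)
  have hu_cont := hu.continuous
  have hderiv (i : ι) : deriv (fun t => w t i) = fun s => deriv w s i := funext fun s =>
    ((EuclideanSpace.proj (𝕜 := ℝ) i).hasFDerivAt.comp_hasDerivAt s
      (hw.differentiable two_ne_zero s).hasDerivAt).deriv
  have horth_comp (i : ι) : ∫ s in 0..L, w s i * u s * u s = 0 := by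
    have h := congrArg (EuclideanSpace.proj i) horth
    rw [← ContinuousLinearMap.intervalIntegral_comp_comm _
      ((by fun_prop : Continuous fun s => u s ^ 2 • w s).intervalIntegrable 0 L)] at h
    simpa [mul_comm, mul_assoc, sq] using h
  have hlhs : ∫ s in 0..L, ‖u s • w s‖ ^ 2 = ∑ i, ∫ s in 0..L, (w s i * u s) ^ 2 := by
    simp_rw [EuclideanSpace.real_norm_sq_eq, PiLp.smul_apply, smul_eq_mul, mul_comm (u _)]
    exact intervalIntegral_sum_eq_sum_intervalIntegral (fun i => by fun_prop) 0 L
  have hrhs : ∫ s in 0..L, ‖deriv w s‖ ^ 2 * u s ^ 2 =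
      ∑ i, ∫ s in 0..L, deriv w s i ^ 2 * u s ^ 2 := by
    simp_rw [EuclideanSpace.real_norm_sq_eq, Finset.sum_mul]
    exact intervalIntegral_sum_eq_sum_intervalIntegral (fun i => by fun_prop) 0 L
  rw [hlhs, hrhs, Finset.mul_sum]
  refine Finset.sum_le_sum fun i _ => ?_
  simpa only [hderiv i] using gap_mul_integral_sq_le hu hup heig hlam' (by fun_prop)
    (fun s => by simp only [hwp s]) (horth_comp i)

end Eigenfunction

theorem gap_bound_Hg_closed_curve_general {ν : ℕ} (L : ℝ) (hL : 0 < L)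
    (g : ℝ) (hg : 0 < g)
    (γ : ℝ → EuclideanSpace ℝ (Fin ν)) (hγ : ContDiff ℝ 2 γ)
    (hγper : ∀ s : ℝ, γ (s + L) = γ s) (harc : ∀ s : ℝ, ‖deriv γ s‖ = 1)
    (V : ℝ → ℝ) (hVdef : ∀ s : ℝ, V s = g * ‖deriv (deriv γ) s‖ ^ 2)
    (u1 : ℝ → ℝ) (lam1 lam2 : ℝ)
    (hu1 : ContDiff ℝ 2 u1) (hu1per : ∀ s : ℝ, u1 (s + L) = u1 s)
    (heig : ∀ s : ℝ, -deriv (deriv u1) s + V s * u1 s = lam1 * u1 s)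
    (hnorm : ∫ s in (0:ℝ)..L, (u1 s) ^ 2 = 1)
    (hlam2 : ∀ φ : ℝ → ℝ, ContDiff ℝ 2 φ → (∀ s : ℝ, φ (s + L) = φ s) →
      (∫ s in (0:ℝ)..L, φ s * u1 s) = 0 →
      lam2 * ∫ s in (0:ℝ)..L, (φ s) ^ 2 ≤
        ∫ s in (0:ℝ)..L, ((deriv φ s) ^ 2 + V s * (φ s) ^ 2)) :
    lam2 - lam1 ≤ max 4 (1 / g) * lam1 := by
  set w := fun s => γ s - ∫ t in 0..L, u1 t ^ 2 • γ t
  have hw : ContDiff ℝ 2 w := hγ.sub contDiff_const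
  have hw' : deriv w = deriv γ := deriv_sub_const_fun _
  have hwp : Periodic w L := fun s => by simp only [w, hγper s]
  have horth : ∫ s in 0..L, u1 s ^ 2 • w s = 0 :=
    intervalIntegral_smul_sub_integral_smul_eq_zero (by fun_prop) hγ.continuous hnorm
  set X := ∫ s in 0..L, ‖u1 s • w s‖ ^ 2
  have hX : 0 ≤ X := integral_nonneg hL.le fun s _ => sq_nonneg _
  have hgap : (lam2 - lam1) * X ≤ 1 := by
    simpa only [hw', harc, one_pow, one_mul, hnorm] using
      gap_mul_integral_norm_sq_le hu1 hu1per heig hlam2 hw hwp horth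
  have hΨ := continuous_derivSqCommutator (hu1.of_le one_le_two) hw
  have hCS : 1 ≤ X * ∫ s in 0..L, ‖derivSqCommutator w u1 s‖ ^ 2 := by
    have h := sq_intervalIntegral_inner_le hL.le (f := fun s => u1 s • w s) (by fun_prop) hΨ
    rw [integral_inner_smul_derivSqCommutator (hu1.of_le one_le_two) hw hu1per hwp] at h
    simpa only [hw', harc, one_pow, mul_one, hnorm, neg_one_sq] using h
  have henergy := integral_norm_derivSqCommutator_sq_le hL.le hg (hu1.of_le one_le_two) hw
    (hw' ▸ harc) (by rw [hw']; exact hVdef)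
  rw [integral_energy_eigenfunction hu1 hu1per heig, hnorm, mul_one] at henergy
  exact le_of_mul_le_one_of_one_le_mul hgap (hCS.trans (mul_le_mul_of_nonneg_left henergy hX)) hX

/-- Corollary 2.2 for `H_g = −d²/ds² + g κ²` on a closed `C²` arc-length-parametrized
curve: with ground state `u₁` of eigenvalue `λ₁` and `λ₂` characterized variationally
on the orthogonal complement of `u₁`, the gap satisfies
`λ₂ − λ₁ ≤ max(4, 1/g)·λ₁`. -/
theorem gap_bound_Hg_closed_curve {ν : ℕ} (hν : 2 ≤ ν) (L : ℝ) (hL : 0 < L)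
    (g : ℝ) (hg : 0 < g)
    (γ : ℝ → EuclideanSpace ℝ (Fin ν)) (hγ : ContDiff ℝ 2 γ)
    (hγper : ∀ s : ℝ, γ (s + L) = γ s) (harc : ∀ s : ℝ, ‖deriv γ s‖ = 1)
    (V : ℝ → ℝ) (hVdef : ∀ s : ℝ, V s = g * ‖deriv (deriv γ) s‖ ^ 2)
    (u1 : ℝ → ℝ) (lam1 lam2 : ℝ)
    (hu1 : ContDiff ℝ 2 u1) (hu1per : ∀ s : ℝ, u1 (s + L) = u1 s)
    (heig : ∀ s : ℝ, -deriv (deriv u1) s + V s * u1 s = lam1 * u1 s)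
    (hnorm : ∫ s in (0:ℝ)..L, (u1 s) ^ 2 = 1)
    (hlam2 : ∀ φ : ℝ → ℝ, ContDiff ℝ 2 φ → (∀ s : ℝ, φ (s + L) = φ s) →
      (∫ s in (0:ℝ)..L, φ s * u1 s) = 0 →
      lam2 * ∫ s in (0:ℝ)..L, (φ s) ^ 2 ≤
        ∫ s in (0:ℝ)..L, ((deriv φ s) ^ 2 + V s * (φ s) ^ 2)) :
    lam2 - lam1 ≤ max 4 (1 / g) * lam1 :=
  gap_bound_Hg_closed_curve_general L hL g hg γ hγ hγper harc V hVdef u1 lam1 lam2 hu1 hu1per heig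
    hnorm hlam2
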